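/- arXiv:1310.3508 — 4 statements merged into one kernel-verified Lean document; each statement's English description precedes it below -/
import Mathlib

section
/- There exists a group homomorphism α from the presented group H_K to the symmetric group on {1,2,3,4,5} such that (in one-line notation, where (a₁a₂a₃a₄a₅) denotes the permutation sending i to aᵢ): α(a)=(15234), α(b)=(13524), α(n)=(14523), α(s)=(12345), α(t)=(15234), α(x)=(14523), α(y)=(34125); i.e., these assignments respect all eight defining relations of H_K. -/
/-- Generators of the presentation of the fundamental group of the exterior
of the graph knot `K` (before simplification). -/
inductive GenK | x | y | n | s | t | a | b

open FreeGroup in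
/-- The relators of `H_K = ⟨x, y, n, s, t, a, b | xyx=yxy, aba=bab, ns=sn, nt=tn,
x=n, s=x⁻¹yx²yx⁻³, st=a, n=a⁻¹ba²ba⁻³⟩`. -/
def relsK : Set (FreeGroup GenK) :=
  { of GenK.x * of GenK.y * of GenK.x * (of GenK.y * of GenK.x * of GenK.y)⁻¹,
    of GenK.a * of GenK.b * of GenK.a * (of GenK.b * of GenK.a * of GenK.b)⁻¹,
    of GenK.n * of GenK.s * (of GenK.s * of GenK.n)⁻¹,
    of GenK.n * of GenK.t * (of GenK.t * of GenK.n)⁻¹,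
    of GenK.x * (of GenK.n)⁻¹,
    of GenK.s * ((of GenK.x)⁻¹ * of GenK.y * (of GenK.x) ^ 2 * of GenK.y *
      ((of GenK.x) ^ 3)⁻¹)⁻¹,
    of GenK.s * of GenK.t * (of GenK.a)⁻¹,
    of GenK.n * ((of GenK.a)⁻¹ * of GenK.b * (of GenK.a) ^ 2 * of GenK.b *
      ((of GenK.a) ^ 3)⁻¹)⁻¹ }

/-- A permutation of `{1,…,5}` (realized as `Fin 5`) from its one-line notation:
`p5 ![a₁,…,a₅]` sends `i` to `aᵢ`. -/
noncomputable def p5 (f : Fin 5 → Fin 5) (h : Function.Bijective f := by decide) : Equiv.Perm (Fin 5) :=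
  Equiv.ofBijective f h

open Equiv in
def permA : Equiv.Perm (Fin 5) := swap 1 4 * swap 4 3 * swap 3 2
open Equiv in
def permB : Equiv.Perm (Fin 5) := swap 1 2 * swap 2 4 * swap 4 3
open Equiv in
def permN : Equiv.Perm (Fin 5) := swap 1 3 * swap 2 4
open Equiv in
def permY : Equiv.Perm (Fin 5) := swap 0 2 * swap 1 3

def FK : GenK → Equiv.Perm (Fin 5)
  | GenK.x => permN
  | GenK.y => permY
  | GenK.n => permN
  | GenK.s => 1
  | GenK.t => permA
  | GenK.a => permA
  | GenK.b => permB

set_option maxRecDepth 10000 in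
lemma hrels : ∀ r ∈ relsK, FreeGroup.lift FK r = 1 := by
  intro r hr
  simp only [relsK, Set.mem_insert_iff, Set.mem_singleton_iff] at hr
  rcases hr with h | h | h | h | h | h | h | h <;> subst h <;>
    simp only [map_mul, map_inv, map_pow, FreeGroup.lift_apply_of, FK] <;> decide

set_option maxRecDepth 10000 in
theorem exists_rep_HK_to_S5 :
    ∃ α : PresentedGroup relsK →* Equiv.Perm (Fin 5),
      α (PresentedGroup.of GenK.a) = p5 ![0, 4, 1, 2, 3] ∧
      α (PresentedGroup.of GenK.b) = p5 ![0, 2, 4, 1, 3] ∧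
      α (PresentedGroup.of GenK.n) = p5 ![0, 3, 4, 1, 2] ∧
      α (PresentedGroup.of GenK.s) = p5 ![0, 1, 2, 3, 4] ∧
      α (PresentedGroup.of GenK.t) = p5 ![0, 4, 1, 2, 3] ∧
      α (PresentedGroup.of GenK.x) = p5 ![0, 3, 4, 1, 2] ∧
      α (PresentedGroup.of GenK.y) = p5 ![2, 3, 0, 1, 4] := by
  refine ⟨PresentedGroup.toGroup hrels, ?_, ?_, ?_, ?_, ?_, ?_, ?_⟩ <;>
    rw [PresentedGroup.toGroup.of] <;>
    refine Equiv.ext fun i => ?_ <;>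
    simp only [p5, Equiv.ofBijective_apply, FK] <;>
    revert i <;> decide
end

section
/- There exists a group homomorphism α₁ from the presented group G_α to the symmetric group on {1,2,3,4,5} such that (in one-line notation, where (a₁a₂a₃a₄a₅) denotes the permutation sending i to aᵢ): α₁(a)=(13245), α₁(c)=(23415), α₁(d)=(45321), α₁(e)=(24351), α₁(f)=(32514), α₁(g)=(13524), α₁(h)=(14532), α₁(i)=(15234), α₁(j)=(13524), α₁(k)=(31425), α₁(l)=(14325), α₁(n)=(45312), α₁(o)=(21345), α₁(p)=(21345), α₁(q)=(42315), α₁(r)=(21345), α₁(s)=(12345), α₁(t)=(24351), α₁(u)=(42315), α₁(v)=(14325), α₁(w)=(15342), α₁(x)=(45312), α₁(y)=(42513); i.e., these assignments respect all defining relations of G_α. -/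
/-- Generators of the presentation `G_α` of the fundamental group of the exterior
of the 2-component graph link `L_α`. -/
inductive GenA
  | c | d | e | f | g | h | i | j | k | l | o | p | q | r | u | v | w | a | x | y | n | s | t

open FreeGroup in
/-- The relators of the presentation `G_α` of the fundamental group of the
exterior of the 2-component graph link `L_α`. -/
def relsA : Set (FreeGroup GenA) :=
  { of GenA.x * of GenA.y * of GenA.x * (of GenA.y * of GenA.x * of GenA.y)⁻¹,
    of GenA.n * of GenA.s * (of GenA.s * of GenA.n)⁻¹,
    of GenA.n * of GenA.t * (of GenA.t * of GenA.n)⁻¹,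
    of GenA.s * ((of GenA.x)⁻¹ * of GenA.y * (of GenA.x) ^ 2 * of GenA.y * ((of GenA.x) ^ 3)⁻¹)⁻¹,
    of GenA.e * (of GenA.s * of GenA.t)⁻¹,
    of GenA.g * of GenA.d * (of GenA.c * of GenA.g)⁻¹,
    of GenA.v * of GenA.e * (of GenA.d * of GenA.v)⁻¹,
    of GenA.c * of GenA.f * (of GenA.e * of GenA.c)⁻¹,
    of GenA.p * of GenA.g * (of GenA.f * of GenA.p)⁻¹,
    of GenA.v * of GenA.h * (of GenA.g * of GenA.v)⁻¹,
    of GenA.w * of GenA.i * (of GenA.h * of GenA.w)⁻¹,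
    of GenA.a * of GenA.j * (of GenA.i * of GenA.a)⁻¹,
    of GenA.e * of GenA.k * (of GenA.j * of GenA.e)⁻¹,
    of GenA.r * of GenA.c * (of GenA.k * of GenA.r)⁻¹,
    of GenA.e * of GenA.o * (of GenA.l * of GenA.e)⁻¹,
    of GenA.r * of GenA.p * (of GenA.o * of GenA.r)⁻¹,
    of GenA.g * of GenA.q * (of GenA.p * of GenA.g)⁻¹,
    of GenA.v * of GenA.r * (of GenA.q * of GenA.v)⁻¹,
    of GenA.c * of GenA.u * (of GenA.r * of GenA.c)⁻¹,
    of GenA.p * of GenA.v * (of GenA.u * of GenA.p)⁻¹,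
    of GenA.h * of GenA.w * (of GenA.v * of GenA.h)⁻¹,
    of GenA.i * of GenA.a * (of GenA.w * of GenA.i)⁻¹,
    of GenA.j * of GenA.l * (of GenA.a * of GenA.j)⁻¹ }

def mk5 (f g : Fin 5 → Fin 5) (h1 : Function.LeftInverse g f := by decide)
    (h2 : Function.RightInverse g f := by decide) : Equiv.Perm (Fin 5) := ⟨f, g, h1, h2⟩

def FA : GenA → Equiv.Perm (Fin 5)
  | GenA.a => mk5 ![0,2,1,3,4] ![0,2,1,3,4]
  | GenA.c => mk5 ![1,2,3,0,4] ![3,0,1,2,4]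
  | GenA.d => mk5 ![3,4,2,1,0] ![4,3,2,0,1]
  | GenA.e => mk5 ![1,3,2,4,0] ![4,0,2,1,3]
  | GenA.f => mk5 ![2,1,4,0,3] ![3,1,0,4,2]
  | GenA.g => mk5 ![0,2,4,1,3] ![0,3,1,4,2]
  | GenA.h => mk5 ![0,3,4,2,1] ![0,4,3,1,2]
  | GenA.i => mk5 ![0,4,1,2,3] ![0,2,3,4,1]
  | GenA.j => mk5 ![0,2,4,1,3] ![0,3,1,4,2]
  | GenA.k => mk5 ![2,0,3,1,4] ![1,3,0,2,4]
  | GenA.l => mk5 ![0,3,2,1,4] ![0,3,2,1,4]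
  | GenA.n => mk5 ![3,4,2,0,1] ![3,4,2,0,1]
  | GenA.o => mk5 ![1,0,2,3,4] ![1,0,2,3,4]
  | GenA.p => mk5 ![1,0,2,3,4] ![1,0,2,3,4]
  | GenA.q => mk5 ![3,1,2,0,4] ![3,1,2,0,4]
  | GenA.r => mk5 ![1,0,2,3,4] ![1,0,2,3,4]
  | GenA.s => mk5 ![0,1,2,3,4] ![0,1,2,3,4]
  | GenA.t => mk5 ![1,3,2,4,0] ![4,0,2,1,3]
  | GenA.u => mk5 ![3,1,2,0,4] ![3,1,2,0,4]
  | GenA.v => mk5 ![0,3,2,1,4] ![0,3,2,1,4]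
  | GenA.w => mk5 ![0,4,2,3,1] ![0,4,2,3,1]
  | GenA.x => mk5 ![3,4,2,0,1] ![3,4,2,0,1]
  | GenA.y => mk5 ![3,1,4,0,2] ![3,1,4,0,2]


lemma hrelA : ∀ r ∈ relsA, FreeGroup.lift FA r = 1 := by
  intro r hr
  simp only [relsA, Set.mem_insert_iff, Set.mem_singleton_iff] at hr
  rcases hr with rfl| rfl| rfl| rfl| rfl| rfl| rfl| rfl| rfl| rfl| rfl| rfl| rfl| rfl| rfl| rfl| rfl| rfl| rfl| rfl| rfl| rfl| rfl <;>
    · simp only [map_mul, map_inv, map_pow, FreeGroup.lift_apply_of]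
      decide

theorem exists_rep_Galpha_to_S5_one :
    ∃ α : PresentedGroup relsA →* Equiv.Perm (Fin 5),
      α (PresentedGroup.of GenA.a) = p5 ![0, 2, 1, 3, 4] ∧
      α (PresentedGroup.of GenA.c) = p5 ![1, 2, 3, 0, 4] ∧
      α (PresentedGroup.of GenA.d) = p5 ![3, 4, 2, 1, 0] ∧
      α (PresentedGroup.of GenA.e) = p5 ![1, 3, 2, 4, 0] ∧
      α (PresentedGroup.of GenA.f) = p5 ![2, 1, 4, 0, 3] ∧
      α (PresentedGroup.of GenA.g) = p5 ![0, 2, 4, 1, 3] ∧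
      α (PresentedGroup.of GenA.h) = p5 ![0, 3, 4, 2, 1] ∧
      α (PresentedGroup.of GenA.i) = p5 ![0, 4, 1, 2, 3] ∧
      α (PresentedGroup.of GenA.j) = p5 ![0, 2, 4, 1, 3] ∧
      α (PresentedGroup.of GenA.k) = p5 ![2, 0, 3, 1, 4] ∧
      α (PresentedGroup.of GenA.l) = p5 ![0, 3, 2, 1, 4] ∧
      α (PresentedGroup.of GenA.n) = p5 ![3, 4, 2, 0, 1] ∧
      α (PresentedGroup.of GenA.o) = p5 ![1, 0, 2, 3, 4] ∧
      α (PresentedGroup.of GenA.p) = p5 ![1, 0, 2, 3, 4] ∧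
      α (PresentedGroup.of GenA.q) = p5 ![3, 1, 2, 0, 4] ∧
      α (PresentedGroup.of GenA.r) = p5 ![1, 0, 2, 3, 4] ∧
      α (PresentedGroup.of GenA.s) = p5 ![0, 1, 2, 3, 4] ∧
      α (PresentedGroup.of GenA.t) = p5 ![1, 3, 2, 4, 0] ∧
      α (PresentedGroup.of GenA.u) = p5 ![3, 1, 2, 0, 4] ∧
      α (PresentedGroup.of GenA.v) = p5 ![0, 3, 2, 1, 4] ∧
      α (PresentedGroup.of GenA.w) = p5 ![0, 4, 2, 3, 1] ∧
      α (PresentedGroup.of GenA.x) = p5 ![3, 4, 2, 0, 1] ∧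
      α (PresentedGroup.of GenA.y) = p5 ![3, 1, 4, 0, 2] := by
  refine ⟨PresentedGroup.toGroup hrelA, ?_⟩
  refine ⟨?_,?_,?_,?_,?_,?_,?_,?_,?_,?_,?_,?_,?_,?_,?_,?_,?_,?_,?_,?_,?_,?_,?_⟩ <;>
    · rw [PresentedGroup.toGroup.of]
      exact Equiv.ext fun _ => rfl
end

section
/- There exists a surjective group homomorphism φ₂ from the presented group G_α to the integers ℤ with φ₂(c)=φ₂(d)=φ₂(e)=φ₂(f)=φ₂(g)=φ₂(h)=φ₂(i)=φ₂(j)=φ₂(k)=φ₂(t)=−1, φ₂(a)=φ₂(l)=φ₂(o)=φ₂(p)=φ₂(q)=φ₂(r)=φ₂(u)=φ₂(v)=φ₂(w)=1, φ₂(s)=0, and φ₂(x)=φ₂(y)=φ₂(n)=6; i.e., these values respect all defining relations of G_α. -/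

def valA : GenA → Multiplicative ℤ
  | GenA.a => Multiplicative.ofAdd 1
  | GenA.c => Multiplicative.ofAdd (-1)
  | GenA.d => Multiplicative.ofAdd (-1)
  | GenA.e => Multiplicative.ofAdd (-1)
  | GenA.f => Multiplicative.ofAdd (-1)
  | GenA.g => Multiplicative.ofAdd (-1)
  | GenA.h => Multiplicative.ofAdd (-1)
  | GenA.i => Multiplicative.ofAdd (-1)
  | GenA.j => Multiplicative.ofAdd (-1)
  | GenA.k => Multiplicative.ofAdd (-1)
  | GenA.l => Multiplicative.ofAdd 1
  | GenA.n => Multiplicative.ofAdd 6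
  | GenA.o => Multiplicative.ofAdd 1
  | GenA.p => Multiplicative.ofAdd 1
  | GenA.q => Multiplicative.ofAdd 1
  | GenA.r => Multiplicative.ofAdd 1
  | GenA.s => Multiplicative.ofAdd 0
  | GenA.t => Multiplicative.ofAdd (-1)
  | GenA.u => Multiplicative.ofAdd 1
  | GenA.v => Multiplicative.ofAdd 1
  | GenA.w => Multiplicative.ofAdd 1
  | GenA.x => Multiplicative.ofAdd 6
  | GenA.y => Multiplicative.ofAdd 6

lemma valA_rels : ∀ r ∈ relsA, FreeGroup.lift valA r = 1 := by
  intro r hr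
  simp only [relsA, Set.mem_insert_iff, Set.mem_singleton_iff] at hr
  rcases hr with rfl|rfl|rfl|rfl|rfl|rfl|rfl|rfl|rfl|rfl|rfl|rfl|rfl|rfl|rfl|rfl|rfl|rfl|rfl|rfl|rfl|rfl|rfl <;>
    simp only [map_mul, map_inv, map_pow, FreeGroup.lift_apply_of, valA] <;> decide

/-- There is a surjective homomorphism `φ₂ : G_α → ℤ` (the cohomology class `(1,−1)`)
taking the prescribed values on the generators. -/
theorem exists_phi_two_Galpha :
    ∃ φ₂ : PresentedGroup relsA →* Multiplicative ℤ,
      Function.Surjective φ₂ ∧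
      φ₂ (PresentedGroup.of GenA.a) = Multiplicative.ofAdd 1 ∧
      φ₂ (PresentedGroup.of GenA.c) = Multiplicative.ofAdd (-1) ∧
      φ₂ (PresentedGroup.of GenA.d) = Multiplicative.ofAdd (-1) ∧
      φ₂ (PresentedGroup.of GenA.e) = Multiplicative.ofAdd (-1) ∧
      φ₂ (PresentedGroup.of GenA.f) = Multiplicative.ofAdd (-1) ∧
      φ₂ (PresentedGroup.of GenA.g) = Multiplicative.ofAdd (-1) ∧
      φ₂ (PresentedGroup.of GenA.h) = Multiplicative.ofAdd (-1) ∧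
      φ₂ (PresentedGroup.of GenA.i) = Multiplicative.ofAdd (-1) ∧
      φ₂ (PresentedGroup.of GenA.j) = Multiplicative.ofAdd (-1) ∧
      φ₂ (PresentedGroup.of GenA.k) = Multiplicative.ofAdd (-1) ∧
      φ₂ (PresentedGroup.of GenA.l) = Multiplicative.ofAdd 1 ∧
      φ₂ (PresentedGroup.of GenA.n) = Multiplicative.ofAdd 6 ∧
      φ₂ (PresentedGroup.of GenA.o) = Multiplicative.ofAdd 1 ∧
      φ₂ (PresentedGroup.of GenA.p) = Multiplicative.ofAdd 1 ∧
      φ₂ (PresentedGroup.of GenA.q) = Multiplicative.ofAdd 1 ∧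
      φ₂ (PresentedGroup.of GenA.r) = Multiplicative.ofAdd 1 ∧
      φ₂ (PresentedGroup.of GenA.s) = Multiplicative.ofAdd 0 ∧
      φ₂ (PresentedGroup.of GenA.t) = Multiplicative.ofAdd (-1) ∧
      φ₂ (PresentedGroup.of GenA.u) = Multiplicative.ofAdd 1 ∧
      φ₂ (PresentedGroup.of GenA.v) = Multiplicative.ofAdd 1 ∧
      φ₂ (PresentedGroup.of GenA.w) = Multiplicative.ofAdd 1 ∧
      φ₂ (PresentedGroup.of GenA.x) = Multiplicative.ofAdd 6 ∧
      φ₂ (PresentedGroup.of GenA.y) = Multiplicative.ofAdd 6 := by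
  refine ⟨PresentedGroup.toGroup valA_rels, ?_, ?_⟩
  · intro z
    refine ⟨(PresentedGroup.of GenA.a) ^ (Multiplicative.toAdd z), ?_⟩
    rw [map_zpow, PresentedGroup.toGroup.of]
    show (Multiplicative.ofAdd (1:ℤ)) ^ (Multiplicative.toAdd z) = z
    rw [← ofAdd_zsmul, smul_eq_mul, mul_one]
    rfl
  · simp only [PresentedGroup.toGroup.of]
    refine ⟨rfl, rfl, rfl, rfl, rfl, rfl, rfl, rfl, rfl, rfl, rfl, rfl, rfl, rfl, rfl, rfl, rfl, rfl, rfl, rfl, rfl, rfl, rfl⟩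
end

section
/- In the abelianization of the presented group Ĝ_α, the classes of c, d, e, f, g, h, i, j, k, and t are all equal; the classes of a, l, o, p, q, r, u, v, and w are all equal; the class of s is trivial; and the classes of x, y, and n are each equal to six times the class of v (written additively). -/
open FreeGroup in
/-- The relators of the presentation `Ĝ_α` (including the two splicing relations) of the fundamental group of the
exterior of the 2-component graph link `L_α`. -/
def relsAhat : Set (FreeGroup GenA) :=
  { of GenA.x * of GenA.y * of GenA.x * (of GenA.y * of GenA.x * of GenA.y)⁻¹,
    of GenA.n * of GenA.s * (of GenA.s * of GenA.n)⁻¹,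
    of GenA.n * of GenA.t * (of GenA.t * of GenA.n)⁻¹,
    of GenA.s * ((of GenA.x)⁻¹ * of GenA.y * (of GenA.x) ^ 2 * of GenA.y * ((of GenA.x) ^ 3)⁻¹)⁻¹,
    of GenA.e * (of GenA.s * of GenA.t)⁻¹,
    of GenA.g * of GenA.d * (of GenA.c * of GenA.g)⁻¹,
    of GenA.v * of GenA.e * (of GenA.d * of GenA.v)⁻¹,
    of GenA.c * of GenA.f * (of GenA.e * of GenA.c)⁻¹,
    of GenA.p * of GenA.g * (of GenA.f * of GenA.p)⁻¹,
    of GenA.v * of GenA.h * (of GenA.g * of GenA.v)⁻¹,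
    of GenA.w * of GenA.i * (of GenA.h * of GenA.w)⁻¹,
    of GenA.a * of GenA.j * (of GenA.i * of GenA.a)⁻¹,
    of GenA.e * of GenA.k * (of GenA.j * of GenA.e)⁻¹,
    of GenA.r * of GenA.c * (of GenA.k * of GenA.r)⁻¹,
    of GenA.e * of GenA.o * (of GenA.l * of GenA.e)⁻¹,
    of GenA.r * of GenA.p * (of GenA.o * of GenA.r)⁻¹,
    of GenA.g * of GenA.q * (of GenA.p * of GenA.g)⁻¹,
    of GenA.v * of GenA.r * (of GenA.q * of GenA.v)⁻¹,
    of GenA.c * of GenA.u * (of GenA.r * of GenA.c)⁻¹,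
    of GenA.p * of GenA.v * (of GenA.u * of GenA.p)⁻¹,
    of GenA.h * of GenA.w * (of GenA.v * of GenA.h)⁻¹,
    of GenA.i * of GenA.a * (of GenA.w * of GenA.i)⁻¹,
    of GenA.j * of GenA.l * (of GenA.a * of GenA.j)⁻¹,
    of GenA.x * (of GenA.n)⁻¹,
    of GenA.n * (of GenA.c * of GenA.p * of GenA.v * of GenA.w * of GenA.a * of GenA.e *
      of GenA.r * of GenA.g * of GenA.v * ((of GenA.e) ^ 3)⁻¹)⁻¹ }

/-- The class of a generator in the abelianization of `Ĝ_α`. -/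
def ab (gen : GenA) : Abelianization (PresentedGroup relsAhat) :=
  Abelianization.of (PresentedGroup.of gen)

section CommGroup

variable {G : Type*} [CommGroup G]

theorem eq_of_mul_eq_mul_comm {a b c : G} (h : a * b = c * a) : b = c :=
  mul_left_cancel (h.trans (mul_comm c a))

theorem eq_of_braid {a b : G} (h : a * b * a = b * a * b) : a = b := by
  rw [mul_comm a b] at h
  exact mul_left_cancel h

end CommGroup

open FreeGroup (of)

def abHom : FreeGroup GenA →* Abelianization (PresentedGroup relsAhat) :=
  Abelianization.of.comp (PresentedGroup.mk relsAhat)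

@[simp]
theorem abHom_of (gen : GenA) : abHom (of gen) = ab gen := rfl

theorem abHom_eq_of_mul_inv_mem {u w : FreeGroup GenA} (h : u * w⁻¹ ∈ relsAhat := by
      simp only [relsAhat, Set.mem_insert_iff, Set.mem_singleton_iff, true_or, or_true]) :
    abHom u = abHom w :=
  congrArg Abelianization.of (PresentedGroup.mk_eq_mk_of_mul_inv_mem h)

theorem ab_eq_of_conj_mem {g₀ g₁ g₂ : GenA}
    (h : of g₀ * of g₁ * (of g₂ * of g₀)⁻¹ ∈ relsAhat := by
      simp only [relsAhat, Set.mem_insert_iff, Set.mem_singleton_iff, true_or, or_true]) :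
    ab g₁ = ab g₂ := by
  have hrel := abHom_eq_of_mul_inv_mem h
  simp only [map_mul, abHom_of] at hrel
  exact eq_of_mul_eq_mul_comm hrel

theorem ab_x_eq_ab_y : ab .x = ab .y := by
  have hrel := abHom_eq_of_mul_inv_mem (u := of .x * of .y * of .x) (w := of .y * of .x * of .y)
  simp only [map_mul, abHom_of] at hrel
  exact eq_of_braid hrel

theorem ab_s_eq_one : ab .s = 1 := by
  have hrel := abHom_eq_of_mul_inv_mem (u := of .s)
    (w := (of .x)⁻¹ * of .y * (of .x) ^ 2 * of .y * ((of .x) ^ 3)⁻¹)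
  simp only [map_mul, map_inv, map_pow, abHom_of, ← ab_x_eq_ab_y] at hrel
  rw [hrel]
  group

theorem ab_e_eq_ab_t : ab .e = ab .t := by
  have hrel := abHom_eq_of_mul_inv_mem (u := of .e) (w := of .s * of .t)
  simpa only [map_mul, abHom_of, ab_s_eq_one, one_mul] using hrel

theorem ab_eq_ab_t :
    ab .c = ab .t ∧ ab .d = ab .t ∧ ab .e = ab .t ∧ ab .f = ab .t ∧ ab .g = ab .t ∧
      ab .h = ab .t ∧ ab .i = ab .t ∧ ab .j = ab .t ∧ ab .k = ab .t := by
  have he : ab .e = ab .t := ab_e_eq_ab_t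
  have hd : ab .d = ab .e := (ab_eq_of_conj_mem (g₀ := .v)).symm
  have hc : ab .c = ab .d := (ab_eq_of_conj_mem (g₀ := .g)).symm
  have hf : ab .f = ab .e := ab_eq_of_conj_mem (g₀ := .c)
  have hg : ab .g = ab .f := ab_eq_of_conj_mem (g₀ := .p)
  have hh : ab .h = ab .g := ab_eq_of_conj_mem (g₀ := .v)
  have hi : ab .i = ab .h := ab_eq_of_conj_mem (g₀ := .w)
  have hj : ab .j = ab .i := ab_eq_of_conj_mem (g₀ := .a)
  have hk : ab .k = ab .j := ab_eq_of_conj_mem (g₀ := .e)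
  simp only [*, and_self]

theorem ab_eq_ab_v :
    ab .a = ab .v ∧ ab .l = ab .v ∧ ab .o = ab .v ∧ ab .p = ab .v ∧ ab .q = ab .v ∧
      ab .r = ab .v ∧ ab .u = ab .v ∧ ab .w = ab .v := by
  have hw : ab .w = ab .v := ab_eq_of_conj_mem (g₀ := .h)
  have ha : ab .a = ab .w := ab_eq_of_conj_mem (g₀ := .i)
  have hl : ab .l = ab .a := ab_eq_of_conj_mem (g₀ := .j)
  have ho : ab .o = ab .l := ab_eq_of_conj_mem (g₀ := .e)
  have hp : ab .p = ab .o := ab_eq_of_conj_mem (g₀ := .r)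
  have hq : ab .q = ab .p := ab_eq_of_conj_mem (g₀ := .g)
  have hr : ab .r = ab .q := ab_eq_of_conj_mem (g₀ := .v)
  have hu : ab .u = ab .r := ab_eq_of_conj_mem (g₀ := .c)
  simp only [*, and_self]

theorem ab_n_eq_pow_six : ab .n = ab .v ^ 6 := by
  have hrel := abHom_eq_of_mul_inv_mem (u := of .n) (w := of .c * of .p * of .v * of .w * of .a *
    of .e * of .r * of .g * of .v * ((of .e) ^ 3)⁻¹)
  obtain ⟨hc, -, he, -, hg, -⟩ := ab_eq_ab_t
  obtain ⟨ha, -, -, hp, -, hr, -, hw⟩ := ab_eq_ab_v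
  simp only [map_mul, map_inv, map_pow, abHom_of, hc, he, hg, ha, hp, hr, hw] at hrel
  rw [hrel, mul_inv_eq_iff_eq_mul]
  simp only [pow_succ, pow_zero, one_mul]
  ac_rfl

theorem ab_x_eq_ab_n : ab .x = ab .n :=
  abHom_eq_of_mul_inv_mem (u := of .x) (w := of .n)

/-- In the abelianization of `Ĝ_α`: the classes of `c,d,e,f,g,h,i,j,k,t` are all
equal; the classes of `a,l,o,p,q,r,u,v,w` are all equal; the class of `s` is
trivial; and the classes of `x`, `y`, `n` each equal six times the class of `v`
(written here multiplicatively as a sixth power). -/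
theorem abelianization_Galpha_classes :
    (ab .c = ab .t ∧ ab .d = ab .t ∧ ab .e = ab .t ∧ ab .f = ab .t ∧ ab .g = ab .t ∧
      ab .h = ab .t ∧ ab .i = ab .t ∧ ab .j = ab .t ∧ ab .k = ab .t) ∧
    (ab .a = ab .v ∧ ab .l = ab .v ∧ ab .o = ab .v ∧ ab .p = ab .v ∧ ab .q = ab .v ∧
      ab .r = ab .v ∧ ab .u = ab .v ∧ ab .w = ab .v) ∧
    ab .s = 1 ∧
    (ab .x = (ab .v) ^ 6 ∧ ab .y = (ab .v) ^ 6 ∧ ab .n = (ab .v) ^ 6) := by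
  have hx : ab .x = ab .v ^ 6 := ab_x_eq_ab_n.trans ab_n_eq_pow_six
  exact ⟨ab_eq_ab_t, ab_eq_ab_v, ab_s_eq_one, hx, ab_x_eq_ab_y ▸ hx, ab_n_eq_pow_six⟩
end
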